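/- arXiv:1805.04071 — 4 statements merged into one kernel-verified Lean document; each statement's English description precedes it below -/
import Mathlib

section
/- For every integer n' ≥ 1 and every real number p with 1/(2n') ≤ p ≤ 1/n', one has n'·p·(1−p)^{n'−1} ≥ 1/(2e). (This is the key success-probability bound for one round of the decay protocol: if n' stations each transmit independently with probability p, the probability that exactly one transmits is n'·p·(1−p)^{n'−1}.) -/
/-! Since `log (1 - p) ≥ 1 - 1/(1 - p) = -p/(1 - p)`, the constraint `n'p ≤ 1` gives
`(n' - 1) log (1 - p) ≥ -1`, i.e. `(1 - p)^(n'-1) ≥ e⁻¹`; together with `n'p ≥ 1/2` this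
yields the bound `e⁻¹/2`. -/

open Real

lemma Real.neg_one_le_nat_mul_log_one_sub {m : ℕ} {p : ℝ} (hp : p < 1)
    (hmp : ((m : ℝ) + 1) * p ≤ 1) : -1 ≤ m * log (1 - p) := by
  have h1p : 0 < 1 - p := sub_pos.2 hp
  have hlog : -(p / (1 - p)) ≤ log (1 - p) := by
    convert one_sub_inv_le_log_of_pos h1p using 1
    field_simp
    ring
  have hratio : m * (p / (1 - p)) ≤ 1 := by
    rw [← mul_div_assoc, div_le_one h1p]
    linarith
  nlinarith [(Nat.cast_nonneg m : (0 : ℝ) ≤ m)]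

lemma Real.exp_neg_one_le_one_sub_pow {m : ℕ} {p : ℝ} (hmp : ((m : ℝ) + 1) * p ≤ 1) :
    exp (-1) ≤ (1 - p) ^ m := by
  rcases m with _ | m
  · simp
  have hp : p < 1 := by
    push_cast at hmp
    nlinarith [(Nat.cast_nonneg m : (0 : ℝ) ≤ m)]
  calc exp (-1) ≤ exp ((m + 1 : ℕ) * log (1 - p)) :=
        exp_le_exp.2 (neg_one_le_nat_mul_log_one_sub hp hmp)
    _ = (1 - p) ^ (m + 1) := by rw [exp_nat_mul, exp_log (sub_pos.2 hp)]

/-- For every integer `n' ≥ 1` and every real `p` with `1/(2n') ≤ p ≤ 1/n'`,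
the probability `n'·p·(1−p)^{n'−1}` that exactly one of `n'` stations transmits
is at least `1/(2e)`. -/
theorem decay_success_probability (n' : ℕ) (hn : 1 ≤ n') (p : ℝ)
    (hp₁ : 1 / (2 * (n' : ℝ)) ≤ p) (hp₂ : p ≤ 1 / (n' : ℝ)) :
    1 / (2 * Real.exp 1) ≤ (n' : ℝ) * p * (1 - p) ^ (n' - 1) := by
  have hn' : (0 : ℝ) < n' := by exact_mod_cast hn
  have hhalf : 1 / 2 ≤ (n' : ℝ) * p := by
    rw [div_le_iff₀ (by positivity)] at hp₁
    linarith
  have hle : (((n' - 1 : ℕ) : ℝ) + 1) * p ≤ 1 := by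
    rw [← Nat.cast_add_one, Nat.sub_add_cancel hn]
    rwa [le_div_iff₀ hn', mul_comm] at hp₂
  calc 1 / (2 * exp 1) = 1 / 2 * exp (-1) := by rw [exp_neg]; field_simp
    _ ≤ (n' : ℝ) * p * (1 - p) ^ (n' - 1) :=
        mul_le_mul hhalf (exp_neg_one_le_one_sub_pow hle) (exp_nonneg _) (by linarith)
end

section
/- There exist three universal constants 0 < ε₀ < 1, N₀ ≥ 1, and c₀ ≥ 1 such that the following is true: for every natural number N ≥ N₀ and every real number ε with c₀/√N ≤ |ε| ≤ ε₀, one has e^{−1}(1 − 0.51ε²) ≤ (1+ε)·(1 − (1+ε)/N)^{N−1} ≤ e^{−1}(1 − 0.49ε²). -/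
/-!
Write `δ = (N - 1) log (1 - (1 + ε) / N) + (1 + ε)`. Then
`(1 + ε) (1 - (1 + ε) / N) ^ (N - 1) = e⁻¹ · (1 + ε) e^{-ε} · e^δ`, where
`(1 + ε) e^{-ε} = 1 - ε² / 2 + O(|ε|³)` and `δ = O(1 / N)`. The hypothesis `c₀ / √N ≤ |ε|` gives
`1 / N ≤ ε² / c₀²`, so for small `ε₀` and large `c₀` both error terms are tiny multiples of `ε²`.
-/

open Real Finset

lemma abs_log_one_sub_add_le {x : ℝ} (hx : |x| ≤ 1 / 2) : |log (1 - x) + x| ≤ 2 * x ^ 2 := by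
  have h := abs_log_sub_add_sum_range_le (x := x) (by linarith) 1
  simp only [range_one, sum_singleton, zero_add, pow_one, Nat.cast_zero, div_one] at h
  calc |log (1 - x) + x| = |x + log (1 - x)| := by rw [add_comm]
    _ ≤ |x| ^ 2 / (1 - |x|) := h
    _ ≤ 2 * x ^ 2 := by
      rw [div_le_iff₀ (by linarith), sq_abs]
      nlinarith [sq_nonneg x]

lemma abs_sub_one_mul_log_one_sub_div_add_le {n a : ℝ} (hn : 1 ≤ n) (ha : |a| ≤ n / 2) :
    |(n - 1) * log (1 - a / n) + a| ≤ (2 * a ^ 2 + |a|) / n := by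
  have hn0 : 0 < n := by linarith
  have hx : |a / n| ≤ 1 / 2 := by
    rw [abs_div, abs_of_pos hn0, div_le_iff₀ hn0]
    linarith
  have hlog := abs_log_one_sub_add_le hx
  calc |(n - 1) * log (1 - a / n) + a|
      = |(n - 1) * (log (1 - a / n) + a / n) + a / n| := by
        congr 1
        field_simp
        ring
    _ ≤ (n - 1) * (2 * (a / n) ^ 2) + |a| / n := by
        refine (abs_add_le _ _).trans ?_
        rw [abs_mul, abs_of_nonneg (by linarith : 0 ≤ n - 1), abs_div, abs_of_pos hn0]
        gcongr
    _ ≤ (2 * a ^ 2 + |a|) / n := by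
        rw [div_pow, add_div]
        gcongr
        rw [mul_div_assoc', le_div_iff₀ (by positivity)]
        field_simp
        nlinarith [sq_nonneg a]

lemma abs_one_add_mul_exp_neg_sub_le {x : ℝ} (hx : |x| ≤ 1) :
    |(1 + x) * exp (-x) - (1 - x ^ 2 / 2)| ≤ |x| ^ 3 := by
  have htaylor : |exp (-x) - (1 - x + x ^ 2 / 2)| ≤ |x| ^ 3 * (2 / 9) := by
    have h := Real.exp_bound (x := -x) (by rwa [abs_neg]) (n := 3) (by norm_num)
    simp only [sum_range_succ, range_zero, sum_empty, abs_neg, Nat.factorial] at h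
    norm_num at h
    convert h using 3
    ring
  have h1x : |1 + x| ≤ 2 := (abs_add_le _ _).trans (by norm_num; linarith)
  calc |(1 + x) * exp (-x) - (1 - x ^ 2 / 2)|
      = |(1 + x) * (exp (-x) - (1 - x + x ^ 2 / 2)) + x ^ 3 / 2| := by ring_nf
    _ ≤ 2 * (|x| ^ 3 * (2 / 9)) + |x| ^ 3 / 2 := by
        refine (abs_add_le _ _).trans ?_
        rw [abs_mul, abs_div, abs_pow, abs_two]
        gcongr
    _ ≤ |x| ^ 3 := by nlinarith [pow_nonneg (abs_nonneg x) 3]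

lemma abs_mul_sub_le_of_abs_sub_le {A E u α β : ℝ} (hA : |A - u| ≤ α) (hE : |E - 1| ≤ β) :
    |A * E - u| ≤ α * β + α + |u| * β := by
  have hα : 0 ≤ α := (abs_nonneg _).trans hA
  calc |A * E - u| = |(A - u) * (E - 1) + (A - u) + u * (E - 1)| := by ring_nf
    _ ≤ |A - u| * |E - 1| + |A - u| + |u| * |E - 1| := by
        rw [← abs_mul, ← abs_mul]
        exact (abs_add_le _ _).trans (add_le_add_left (abs_add_le _ _) _)
    _ ≤ α * β + α + |u| * β := by gcongr

lemma one_add_mul_one_sub_pow_eq {N : ℕ} (hN : 1 ≤ N) {ε : ℝ} (h : 0 < 1 - (1 + ε) / N) :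
    (1 + ε) * (1 - (1 + ε) / N) ^ (N - 1) =
      (exp 1)⁻¹ * ((1 + ε) * exp (-ε)) * exp ((N - 1) * log (1 - (1 + ε) / N) + (1 + ε)) := by
  have hpow : exp ((N - 1) * log (1 - (1 + ε) / N)) = (1 - (1 + ε) / N) ^ (N - 1) := by
    rw [show (N - 1 : ℝ) = (N - 1 : ℕ) by push_cast [hN]; ring, exp_nat_mul, exp_log h]
  rw [exp_add, hpow, exp_add, exp_neg]
  field_simp

lemma sq_div_le_sq_of_div_sqrt_le_abs {c n ε : ℝ} (hc : 0 ≤ c) (hn : 0 ≤ n) (h : c / √n ≤ |ε|) :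
    c ^ 2 / n ≤ ε ^ 2 := by
  have := pow_le_pow_left₀ (by positivity) h 2
  rwa [div_pow, sq_sqrt hn, sq_abs] at this

/-- There exist universal constants `0 < ε₀ < 1`, `N₀ ≥ 1`, `c₀ ≥ 1` such that for every
natural number `N ≥ N₀` and every real `ε` with `c₀/√N ≤ |ε| ≤ ε₀`,
`e⁻¹(1 − 0.51ε²) ≤ (1+ε)(1 − (1+ε)/N)^{N−1} ≤ e⁻¹(1 − 0.49ε²)`. -/
theorem aux_calc_bound :
    ∃ (ε₀ c₀ : ℝ) (N₀ : ℕ), 0 < ε₀ ∧ ε₀ < 1 ∧ 1 ≤ N₀ ∧ 1 ≤ c₀ ∧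
      ∀ N : ℕ, N₀ ≤ N → ∀ ε : ℝ, c₀ / Real.sqrt N ≤ |ε| → |ε| ≤ ε₀ →
        (Real.exp 1)⁻¹ * (1 - 0.51 * ε ^ 2) ≤ (1 + ε) * (1 - (1 + ε) / N) ^ (N - 1) ∧
          (1 + ε) * (1 - (1 + ε) / N) ^ (N - 1) ≤ (Real.exp 1)⁻¹ * (1 - 0.49 * ε ^ 2) := by
  refine ⟨1 / 1000, 1000, 1, by norm_num, by norm_num, le_rfl, by norm_num, ?_⟩
  intro N hN ε hlow hup
  obtain ⟨hεl, hεu⟩ := abs_le.mp hup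
  have hN1 : (1 : ℝ) ≤ N := by exact_mod_cast hN
  have hNε : 1000 ^ 2 ≤ ε ^ 2 * N := by
    rw [← div_le_iff₀ (by positivity)]
    exact sq_div_le_sq_of_div_sqrt_le_abs (by norm_num) (Nat.cast_nonneg N) hlow
  have hε2 : ε ^ 2 ≤ 1 / 1000 ^ 2 := by nlinarith
  have hNlarge : (1000 : ℝ) ^ 4 ≤ N := by nlinarith
  rw [one_add_mul_one_sub_pow_eq hN (by rw [sub_pos, div_lt_one (by linarith)]; linarith)]
  set δ := (N - 1 : ℝ) * log (1 - (1 + ε) / N) + (1 + ε)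
  have hδ : |δ| ≤ ε ^ 2 / 2000 := by
    have ha : |1 + ε| ≤ N / 2 := abs_le.mpr ⟨by linarith, by linarith⟩
    refine (abs_sub_one_mul_log_one_sub_div_add_le hN1 ha).trans ?_
    rw [abs_of_pos (by linarith), div_le_iff₀ (by linarith)]
    nlinarith
  have hE : |exp δ - 1| ≤ ε ^ 2 / 1000 := (abs_exp_sub_one_le (by nlinarith)).trans (by linarith)
  have hA : |(1 + ε) * exp (-ε) - (1 - ε ^ 2 / 2)| ≤ ε ^ 2 / 1000 := by
    refine (abs_one_add_mul_exp_neg_sub_le (by linarith)).trans ?_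
    rw [pow_succ, sq_abs]
    nlinarith [abs_nonneg ε]
  have hu : |1 - ε ^ 2 / 2| ≤ 1 := abs_le.mpr ⟨by nlinarith, by nlinarith⟩
  have hprod : |(1 + ε) * exp (-ε) * exp δ - (1 - ε ^ 2 / 2)| ≤ ε ^ 2 / 100 :=
    (abs_mul_sub_le_of_abs_sub_le hA hE).trans
      (by nlinarith [mul_le_mul_of_nonneg_right hu (by positivity : 0 ≤ ε ^ 2 / 1000)])
  obtain ⟨hlo, hhi⟩ := abs_le.mp hprod
  rw [mul_assoc]
  constructor <;> gcongr <;> linarith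
end

section
/- Let G be a connected simple graph on a finite vertex set V with |V| = n ≥ 2, let s ∈ V, and let p = (ln n)/√n (which lies in (0,1) for n ≥ 2). Let (ξ_v)_{v∈V} be independent Bernoulli(p) random variables, i.e. consider the product of Bernoulli(p) measures on {0,1}^V, and let U = {s} ∪ {v ∈ V : ξ_v = 1}. Let C ≥ 3 be a real number and let m = ⌈C√n⌉. Then with probability at least 1 − n^{2−C}, the following event holds: for every vertex t ∈ V there exists a path from s to t in G of length dist_G(s,t) (i.e. a shortest s–t path) such that among any m consecutive vertices of this path at least one belongs to U. -/
/-!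
Fix a shortest path `w t` from `s` to every `t`. If the event fails, some window of `m`
consecutive vertices of some `w t` misses the sample; it cannot start at `s`. The `m` vertices
of a window are distinct, so it misses the sample with probability
`(1 - p)^m ≤ exp (-p m) ≤ n^(-C)`, and a union bound over the at most `n` targets and `n`
windows per path gives `n^(2 - C)`.
-/

open MeasureTheory SimpleGraph Finset
open scoped ENNReal

namespace Real

theorem log_le_sqrt {x : ℝ} (hx : 0 < x) : log x ≤ √x := by
  set z := √(√x)
  have hz : 0 < z := by positivity
  have hzx : x = (z ^ 2) ^ 2 := by simp only [z, sq_sqrt, sqrt_nonneg, hx.le]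
  have hz2 : √x = z ^ 2 := by rw [sq_sqrt (sqrt_nonneg x)]
  have hlog : log x = 4 * log z := by rw [hzx, log_pow, log_pow]; push_cast; ring
  rw [hlog, hz2]
  nlinarith [log_le_sub_one_of_pos hz, sq_nonneg (z - 2)]

theorem log_div_sqrt_le_one {x : ℝ} (hx : 0 < x) : log x / √x ≤ 1 :=
  div_le_one_of_le₀ (log_le_sqrt hx) (sqrt_nonneg x)

theorem one_sub_log_div_sqrt_pow_le {n : ℕ} (hn : 1 ≤ n) {C : ℝ} {m : ℕ}
    (hm : C * √n ≤ m) : (1 - log n / √n) ^ m ≤ (n : ℝ) ^ (-C) := by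
  have hn0 : (0 : ℝ) < n := by exact_mod_cast hn
  set q := log n / √n
  have hq0 : 0 ≤ q := div_nonneg (log_natCast_nonneg n) (sqrt_nonneg _)
  have hCq : C * log n ≤ m * q := by
    calc C * log n = C * √n * q := by rw [mul_assoc, mul_div_cancel₀ _ (by positivity)]
      _ ≤ m * q := mul_le_mul_of_nonneg_right hm hq0
  calc (1 - q) ^ m ≤ exp (-q) ^ m :=
        pow_le_pow_left₀ (sub_nonneg.2 (log_div_sqrt_le_one hn0)) (one_sub_le_exp_neg q) m
    _ = exp (-(m * q)) := by rw [← exp_nat_mul]; ring_nf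
    _ ≤ exp (-(C * log n)) := exp_le_exp.2 (by linarith)
    _ = (n : ℝ) ^ (-C) := by rw [rpow_def_of_pos hn0]; ring_nf

end Real

noncomputable def bernoulliMeasure (q : ℝ≥0∞) : Measure Bool :=
  q • Measure.dirac true + (1 - q) • Measure.dirac false

theorem isProbabilityMeasure_bernoulliMeasure {q : ℝ≥0∞} (hq : q ≤ 1) :
    IsProbabilityMeasure (bernoulliMeasure q) :=
  ⟨by simp [bernoulliMeasure, add_tsub_cancel_of_le hq]⟩

@[simp]
theorem bernoulliMeasure_false (q : ℝ≥0∞) : bernoulliMeasure q {false} = 1 - q := by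
  simp [bernoulliMeasure]

namespace SimpleGraph.Walk

variable {V : Type*} {G : SimpleGraph V} {u v : V}

theorem IsPath.card_image_getVert_Ico [DecidableEq V] {w : G.Walk u v} (hw : w.IsPath)
    {i m : ℕ} (h : i + m ≤ w.length + 1) : ((Ico i (i + m)).image w.getVert).card = m := by
  rw [card_image_of_injOn, Nat.card_Ico, Nat.add_sub_cancel_left]
  intro a ha b hb
  simp only [coe_Ico, Set.mem_Ico] at ha hb
  exact hw.getVert_injOn (by simp; omega) (by simp; omega)

theorem exists_getVert_eq_start_or_mem {w : G.Walk u v} {U : Set V} {m : ℕ} (hm : 0 < m)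
    (h : ∀ i ∈ Icc 1 (w.length + 1 - m), ∃ j ∈ Ico i (i + m), w.getVert j ∈ U) (i : ℕ)
    (hi : i + m ≤ w.length + 1) :
    ∃ j, i ≤ j ∧ j < i + m ∧ (w.getVert j = u ∨ w.getVert j ∈ U) := by
  rcases Nat.eq_zero_or_pos i with rfl | hi0
  · exact ⟨0, le_rfl, by omega, Or.inl w.getVert_zero⟩
  · obtain ⟨j, hj, hjU⟩ := h i (mem_Icc.2 ⟨hi0, by omega⟩)
    exact ⟨j, (mem_Ico.1 hj).1, (mem_Ico.1 hj).2, Or.inr hjU⟩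

end SimpleGraph.Walk

theorem ENNReal.natCast_sq_mul_one_sub_ofReal_log_div_sqrt_pow_le {n : ℕ} (hn : 1 ≤ n)
    {C : ℝ} {m : ℕ} (hm : C * √n ≤ m) :
    (n : ℝ≥0∞) ^ 2 * (1 - ENNReal.ofReal (Real.log n / √n)) ^ m ≤
      ENNReal.ofReal ((n : ℝ) ^ (2 - C)) := by
  have hn0 : (0 : ℝ) < n := by exact_mod_cast hn
  have hq0 : 0 ≤ Real.log n / √n := div_nonneg (Real.log_natCast_nonneg n) (Real.sqrt_nonneg _)
  rw [← ENNReal.ofReal_one, ← ENNReal.ofReal_sub _ hq0, ← ENNReal.ofReal_natCast,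
    ← ENNReal.ofReal_pow (Nat.cast_nonneg n), ← ENNReal.ofReal_pow,
    ← ENNReal.ofReal_mul (by positivity)]
  · refine ENNReal.ofReal_le_ofReal ?_
    calc (n : ℝ) ^ 2 * (1 - Real.log n / √n) ^ m ≤ (n : ℝ) ^ 2 * (n : ℝ) ^ (-C) := by
          gcongr; exact Real.one_sub_log_div_sqrt_pow_le hn hm
      _ = (n : ℝ) ^ (2 - C) := by
          rw [sub_eq_add_neg, Real.rpow_add hn0, Real.rpow_two]
  · exact sub_nonneg.2 (Real.log_div_sqrt_le_one hn0)

section Window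

variable {V α : Type*} [Fintype V] [MeasurableSpace α] {G : SimpleGraph V} {u v : V}
  (μ : Measure α) [IsProbabilityMeasure μ] (A : Set α)

theorem SimpleGraph.Walk.IsPath.measure_pi_window_mem {w : G.Walk u v} (hw : w.IsPath) {i m : ℕ}
    (h : i + m ≤ w.length + 1) :
    Measure.pi (fun _ : V ↦ μ) {ξ | ∀ j ∈ Ico i (i + m), ξ (w.getVert j) ∈ A} =
      μ A ^ m := by
  classical
  have hset : {ξ : V → α | ∀ j ∈ Ico i (i + m), ξ (w.getVert j) ∈ A} =
      (((Ico i (i + m)).image w.getVert : Finset V) : Set V).pi fun _ ↦ A := by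
    ext ξ
    simp only [Set.mem_ofPred_eq, Set.mem_pi, coe_image, Set.forall_mem_image, mem_coe]
  rw [hset, Measure.pi_pi_finset, prod_const, hw.card_image_getVert_Ico h]

theorem measure_pi_iUnion_window_le {s : V} (w : ∀ t, G.Walk s t) (hw : ∀ t, (w t).IsPath)
    (m : ℕ) :
    Measure.pi (fun _ : V ↦ μ) (⋃ t, ⋃ i ∈ Icc 1 ((w t).length + 1 - m),
        {ξ | ∀ j ∈ Ico i (i + m), ξ ((w t).getVert j) ∈ A}) ≤
      (Fintype.card V : ℝ≥0∞) ^ 2 * μ A ^ m := by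
  calc _ ≤ ∑ t, ∑ i ∈ Icc 1 ((w t).length + 1 - m),
          Measure.pi (fun _ : V ↦ μ)
            {ξ | ∀ j ∈ Ico i (i + m), ξ ((w t).getVert j) ∈ A} :=
        (measure_iUnion_fintype_le _ _).trans
          (sum_le_sum fun t _ ↦ measure_biUnion_finset_le _ _)
    _ ≤ ∑ _t : V, (Fintype.card V : ℝ≥0∞) * μ A ^ m := by
        gcongr with t
        rw [sum_congr rfl fun i hi ↦ (hw t).measure_pi_window_mem μ A (by simp at hi; omega),
          sum_const, nsmul_eq_mul, Nat.card_Icc]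
        have := (hw t).length_lt
        gcongr
        exact_mod_cast (by omega : (w t).length + 1 - m + 1 - 1 ≤ Fintype.card V)
    _ = _ := by simp [sq, mul_assoc]

end Window

theorem hitting_set_shortest_paths_general {V : Type*} [Fintype V] (G : SimpleGraph V)
    (hG : G.Connected) (s : V) (C : ℝ) (hC : 3 ≤ C) :
    ENNReal.ofReal (1 - (Fintype.card V : ℝ) ^ ((2 : ℝ) - C)) ≤
      Measure.pi
        (fun _ : V =>
          (ENNReal.ofReal (Real.log (Fintype.card V) / Real.sqrt (Fintype.card V)) •
              Measure.dirac true +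
            (1 - ENNReal.ofReal
                (Real.log (Fintype.card V) / Real.sqrt (Fintype.card V))) •
              Measure.dirac false))
        {ξ : V → Bool | ∀ t : V, ∃ w : G.Walk s t, w.IsPath ∧ w.length = G.dist s t ∧
          ∀ i : ℕ, i + ⌈C * Real.sqrt (Fintype.card V)⌉₊ ≤ w.length + 1 →
            ∃ j : ℕ, i ≤ j ∧ j < i + ⌈C * Real.sqrt (Fintype.card V)⌉₊ ∧
              (w.getVert j = s ∨ ξ (w.getVert j) = true)} := by
  set n := Fintype.card V
  set m := ⌈C * √n⌉₊
  have hn : 1 ≤ n := Fintype.card_pos_iff.2 ⟨s⟩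
  have hm : 0 < m := Nat.ceil_pos.2 (by positivity)
  set μ := bernoulliMeasure (ENNReal.ofReal (Real.log n / √n))
  have : IsProbabilityMeasure μ := isProbabilityMeasure_bernoulliMeasure
    (ENNReal.ofReal_le_one.2 (Real.log_div_sqrt_le_one (by positivity)))
  choose w hw hwd using hG.exists_path_of_dist s
  set B := ⋃ t, ⋃ i ∈ Icc 1 ((w t).length + 1 - m),
    {ξ : V → Bool | ∀ j ∈ Ico i (i + m), ξ ((w t).getVert j) ∈ ({false} : Set Bool)}
  calc ENNReal.ofReal (1 - (n : ℝ) ^ ((2 : ℝ) - C))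
      = 1 - ENNReal.ofReal ((n : ℝ) ^ ((2 : ℝ) - C)) := by
        rw [ENNReal.ofReal_sub _ (by positivity), ENNReal.ofReal_one]
    _ ≤ 1 - Measure.pi (fun _ : V ↦ μ) B := by
        gcongr
        refine (measure_pi_iUnion_window_le μ {false} w hw m).trans ?_
        rw [bernoulliMeasure_false]
        exact ENNReal.natCast_sq_mul_one_sub_ofReal_log_div_sqrt_pow_le hn (Nat.le_ceil _)
    _ = Measure.pi (fun _ : V ↦ μ) Bᶜ := (prob_compl_eq_one_sub MeasurableSet.of_discrete).symm
    _ ≤ _ := by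
        refine measure_mono fun ξ hξ t ↦ ⟨w t, hw t, hwd t,
          (w t).exists_getVert_eq_start_or_mem (U := {v | ξ v}) hm fun i hi ↦ ?_⟩
        simp only [B, Set.compl_iUnion, Set.mem_iInter] at hξ
        simpa [and_assoc] using hξ t i hi

/-- Hitting-set lemma for shortest paths: let `G` be a connected graph on `n ≥ 2`
vertices, `s` a source, and include each vertex independently with probability
`p = (ln n)/√n` (Bernoulli product measure on `{0,1}^V`); let
`U = {s} ∪ {v : ξ v = 1}`.  For `C ≥ 3` and `m = ⌈C√n⌉`, with probability at least
`1 − n^{2−C}`, every vertex `t` admits a shortest `s`–`t` path in which any `m`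
consecutive vertices contain a vertex of `U`. -/
theorem hitting_set_shortest_paths {V : Type*} [Fintype V] (G : SimpleGraph V)
    (hG : G.Connected) (hn : 2 ≤ Fintype.card V) (s : V) (C : ℝ) (hC : 3 ≤ C) :
    ENNReal.ofReal (1 - (Fintype.card V : ℝ) ^ ((2 : ℝ) - C)) ≤
      Measure.pi
        (fun _ : V =>
          (ENNReal.ofReal (Real.log (Fintype.card V) / Real.sqrt (Fintype.card V)) •
              Measure.dirac true +
            (1 - ENNReal.ofReal
                (Real.log (Fintype.card V) / Real.sqrt (Fintype.card V))) •
              Measure.dirac false))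
        {ξ : V → Bool | ∀ t : V, ∃ w : G.Walk s t, w.IsPath ∧ w.length = G.dist s t ∧
          ∀ i : ℕ, i + ⌈C * Real.sqrt (Fintype.card V)⌉₊ ≤ w.length + 1 →
            ∃ j : ℕ, i ≤ j ∧ j < i + ⌈C * Real.sqrt (Fintype.card V)⌉₊ ∧
              (w.getVert j = s ∨ ξ (w.getVert j) = true)} :=
  hitting_set_shortest_paths_general G hG s C hC
end

section
/- For any two vertices s and t of G, there exist two vertices s' and t' of G* such that dist_G(s,t) ≤ dist_G(s',t'). -/
open SimpleGraph Set

namespace EnergyDiameter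

noncomputable section

variable {V : Type*}

/-- The subgraph of `G` induced by the vertex set `A`, viewed as a graph on the same
vertex type (vertices outside `A` become isolated). -/
def restrictG (G : SimpleGraph V) (A : Set V) : SimpleGraph V where
  Adj x y := G.Adj x y ∧ x ∈ A ∧ y ∈ A
  symm := ⟨by rintro x y ⟨h, hx, hy⟩; exact ⟨h.symm, hy, hx⟩⟩
  loopless := ⟨fun x h => G.loopless.irrefl x h.1⟩

/-- `G[S]`: the subgraph of `G` induced by all edges of `G` having at least one endpoint
in `S`, viewed as a graph on the same vertex type. -/
def edgeNbhdG (G : SimpleGraph V) (S : Set V) : SimpleGraph V where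
  Adj x y := G.Adj x y ∧ (x ∈ S ∨ y ∈ S)
  symm := ⟨by rintro x y ⟨h, hxy⟩; exact ⟨h.symm, hxy.symm⟩⟩
  loopless := ⟨fun x h => G.loopless.irrefl x h.1⟩

/-- The vertex set of `G[S]`: `S` together with all `G`-neighbors of vertices of `S`. -/
def vertsOf (G : SimpleGraph V) (S : Set V) : Set V :=
  S ∪ {x | ∃ w ∈ S, G.Adj x w}

/-- One direction of the edges of `H` together with a new internally disjoint path
of length `l` between `u` and `v` (with internal vertices `Fin (l-1)`). -/
def addPathRel (H : SimpleGraph V) (u v : V) (l : ℕ) :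
    V ⊕ Fin (l - 1) → V ⊕ Fin (l - 1) → Prop
  | Sum.inl a, Sum.inl b => H.Adj a b ∨ (l = 1 ∧ a = u ∧ b = v)
  | Sum.inl a, Sum.inr i => (a = u ∧ (i : ℕ) = 0) ∨ (a = v ∧ (i : ℕ) + 2 = l)
  | Sum.inr i, Sum.inr j => (i : ℕ) + 1 = (j : ℕ)
  | _, _ => False

/-- `G^l[S]`-style construction: `H` with a new internally disjoint path of length `l`
added between `u` and `v`. -/
def addPathG (H : SimpleGraph V) (u v : V) (l : ℕ) : SimpleGraph (V ⊕ Fin (l - 1)) :=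
  SimpleGraph.fromRel (addPathRel H u v l)

/-- `max_{s,t ∈ A} dist_H(s,t)`. -/
def maxDistOn {W : Type*} (H : SimpleGraph W) (A : Set W) : ℕ :=
  sSup {d : ℕ | ∃ s ∈ A, ∃ t ∈ A, d = H.dist s t}

variable [Fintype V]

/-- `√n` where `n` is the number of vertices. -/
def sqrtn (V : Type*) [Fintype V] : ℝ := Real.sqrt (Fintype.card V)

/-- The high-degree vertices: degree at least `√n`. -/
def VH (G : SimpleGraph V) : Set V := {v | sqrtn V ≤ ((G.neighborSet v).ncard : ℝ)}

/-- The low-degree vertices. -/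
def VL (G : SimpleGraph V) : Set V := (VH G)ᶜ

/-- `S` is a connected component of the subgraph of `G` induced by `V_L`. -/
def IsLowComp (G : SimpleGraph V) (S : Set V) : Prop :=
  S ⊆ VL G ∧ ∃ x ∈ S, ∀ y : V, ((restrictG G (VL G)).Reachable x y ↔ y ∈ S)

/-- The set of high-degree vertices having a `G`-neighbor in `S`. -/
def HNbrs (G : SimpleGraph V) (S : Set V) : Set V :=
  {x | x ∈ VH G ∧ ∃ w ∈ S, G.Adj x w}

/-- `|S| ≤ √n`. -/
def SmallComp (S : Set V) : Prop := (S.ncard : ℝ) ≤ sqrtn V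

def IsType1 (G : SimpleGraph V) (S : Set V) : Prop :=
  IsLowComp G S ∧ SmallComp S ∧ ∃ u : V, HNbrs G S = {u}

def IsType2 (G : SimpleGraph V) (S : Set V) : Prop :=
  IsLowComp G S ∧ SmallComp S ∧ ∃ u v : V, u ≠ v ∧ HNbrs G S = {u, v}

def IsType3 (G : SimpleGraph V) (S : Set V) : Prop :=
  IsLowComp G S ∧ ¬ IsType1 G S ∧ ¬ IsType2 G S

/-- `C(u)`: type-1 components attached to `u`. -/
def C1 (G : SimpleGraph V) (u : V) : Set (Set V) :=
  {S | IsLowComp G S ∧ SmallComp S ∧ HNbrs G S = {u}}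

/-- `C(u,v)`: type-2 components attached to `{u,v}`. -/
def C2 (G : SimpleGraph V) (u v : V) : Set (Set V) :=
  {S | IsLowComp G S ∧ SmallComp S ∧ HNbrs G S = {u, v}}

/-- `max_{w ∈ S} dist_G(u,w)`. -/
def eccOn (G : SimpleGraph V) (u : V) (S : Set V) : ℕ := sSup (G.dist u '' S)

/-- `S^{u,k}`: vertices of `S` whose `G[S]`-distance to `v` exceeds that to `u`
by at least `k`. -/
def Suk (G : SimpleGraph V) (S : Set V) (u v : V) (k : ℤ) : Set V :=
  {w | w ∈ S ∧ k ≤ ((edgeNbhdG G S).dist w v : ℤ) - ((edgeNbhdG G S).dist w u : ℤ)}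

/-- `max_{w ∈ S^{u,k}} dist_{G[S]}(u,w)`. -/
def eccK (G : SimpleGraph V) (S : Set V) (u v : V) (k : ℤ) : ℕ :=
  sSup ((edgeNbhdG G S).dist u '' Suk G S u v k)

/-- `φ^l(S) = max_{s,t ∈ S ∪ {u,v}} dist_{G^l[S]}(s,t)`. -/
def phiG (G : SimpleGraph V) (S : Set V) (u v : V) (l : ℕ) : ℕ :=
  maxDistOn (addPathG (edgeNbhdG G S) u v l) (Sum.inl '' (S ∪ {u, v}))

/-- A choice of the distance parameters of type-1 and type-2 components. -/
structure Params (V : Type*) where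
  A1 : V → Set V
  A2 : V → Set V
  B : V → Set V
  R : V → V → Set V
  A1k : ℤ → V → V → Set V
  A2k : ℤ → V → V → Set V
  Bl : ℕ → V → V → Set V

def kBound (V : Type*) [Fintype V] : ℤ := (Nat.floor (sqrtn V) : ℤ) + 1

def lBound (V : Type*) [Fintype V] : ℕ := Nat.floor (sqrtn V) + 1

/-- The defining properties of the parameters (set-valued parameters default to `∅`
when undefined; ties broken arbitrarily). -/
def ValidParams (G : SimpleGraph V) (P : Params V) : Prop :=
  (∀ u ∈ VH G,
    ((C1 G u).Nonempty → P.A1 u ∈ C1 G u ∧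
        ∀ S ∈ C1 G u, eccOn G u S ≤ eccOn G u (P.A1 u)) ∧
    (¬ (C1 G u).Nonempty → P.A1 u = ∅)) ∧
  (∀ u ∈ VH G,
    ((C1 G u \ {P.A1 u}).Nonempty → P.A2 u ∈ C1 G u \ {P.A1 u} ∧
        ∀ S ∈ C1 G u \ {P.A1 u}, eccOn G u S ≤ eccOn G u (P.A2 u)) ∧
    (¬ (C1 G u \ {P.A1 u}).Nonempty → P.A2 u = ∅)) ∧
  (∀ u ∈ VH G,
    ((C1 G u).Nonempty → P.B u ∈ C1 G u ∧
        ∀ S ∈ C1 G u, maxDistOn G (S ∪ {u}) ≤ maxDistOn G (P.B u ∪ {u})) ∧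
    (¬ (C1 G u).Nonempty → P.B u = ∅)) ∧
  (∀ u ∈ VH G, ∀ v ∈ VH G, u ≠ v →
    ((C2 G u v).Nonempty → P.R u v ∈ C2 G u v ∧
        ∀ S ∈ C2 G u v, (edgeNbhdG G (P.R u v)).dist u v ≤ (edgeNbhdG G S).dist u v) ∧
    (¬ (C2 G u v).Nonempty → P.R u v = ∅)) ∧
  (∀ u ∈ VH G, ∀ v ∈ VH G, u ≠ v → ∀ k : ℤ,
    ((C2 G u v).Nonempty → P.A1k k u v ∈ C2 G u v ∧
        ∀ S ∈ C2 G u v, eccK G S u v k ≤ eccK G (P.A1k k u v) u v k) ∧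
    (¬ (C2 G u v).Nonempty → P.A1k k u v = ∅)) ∧
  (∀ u ∈ VH G, ∀ v ∈ VH G, u ≠ v → ∀ k : ℤ,
    ((C2 G u v \ {P.A1k k u v}).Nonempty → P.A2k k u v ∈ C2 G u v \ {P.A1k k u v} ∧
        ∀ S ∈ C2 G u v \ {P.A1k k u v}, eccK G S u v k ≤ eccK G (P.A2k k u v) u v k) ∧
    (¬ (C2 G u v \ {P.A1k k u v}).Nonempty → P.A2k k u v = ∅)) ∧
  (∀ u ∈ VH G, ∀ v ∈ VH G, u ≠ v → ∀ l : ℕ, 1 ≤ l →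
    ((C2 G u v \ {P.R u v}).Nonempty → P.Bl l u v ∈ C2 G u v \ {P.R u v} ∧
        ∀ S ∈ C2 G u v \ {P.R u v}, phiG G S u v l ≤ phiG G (P.Bl l u v) u v l) ∧
    (¬ (C2 G u v \ {P.R u v}).Nonempty → P.Bl l u v = ∅))

/-- The vertex set of `G*`. -/
def VStarP (G : SimpleGraph V) (P : Params V) : Set V :=
  VH G ∪ {x | ∃ S, IsType3 G S ∧ x ∈ S} ∪
    (⋃ u ∈ VH G, P.A1 u ∪ P.A2 u ∪ P.B u) ∪
    (⋃ u ∈ VH G, ⋃ v ∈ VH G, ⋃ (_ : u ≠ v),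
      (⋃ k ∈ {k : ℤ | |k| ≤ kBound V}, P.A1k k u v ∪ P.A2k k u v) ∪
      (⋃ l ∈ Set.Icc 1 (lBound V), P.Bl l u v) ∪ P.R u v)


/-! ### Auxiliary lemmas -/

lemma dist_le_card (G : SimpleGraph V) (x y : V) : G.dist x y ≤ Fintype.card V := by
  classical
  by_cases h : G.Reachable x y
  · obtain ⟨p⟩ := h
    have h1 : G.dist x y ≤ p.bypass.length := SimpleGraph.dist_le _
    have h2 : p.bypass.length < Fintype.card V := p.bypass_isPath.length_lt
    omega
  · rw [SimpleGraph.dist_eq_zero_of_not_reachable h]; omega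

lemma edgeNbhdG_adj_mk {G : SimpleGraph V} {S : Set V} {x y : V} (h : G.Adj x y)
    (h' : x ∈ S ∨ y ∈ S) : (edgeNbhdG G S).Adj x y := ⟨h, h'⟩

lemma edgeNbhdG_adj_G {G : SimpleGraph V} {S : Set V} {x y : V}
    (h : (edgeNbhdG G S).Adj x y) : G.Adj x y := h.1

lemma restrictG_adj_G {G : SimpleGraph V} {A : Set V} {x y : V}
    (h : (restrictG G A).Adj x y) : G.Adj x y := h.1

/-- The identity homomorphism from `edgeNbhdG G S` to `G`. -/
def homEN (G : SimpleGraph V) (S : Set V) : edgeNbhdG G S →g G :=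
  ⟨id, fun h => edgeNbhdG_adj_G h⟩

@[simp] lemma homEN_apply (G : SimpleGraph V) (S : Set V) (a : V) : homEN G S a = a := rfl

lemma Gdist_le_walk {G : SimpleGraph V} {S : Set V} {x y : V}
    (p : (edgeNbhdG G S).Walk x y) : G.dist x y ≤ p.length := by
  have := SimpleGraph.dist_le (p.map (homEN G S))
  exact le_of_le_of_eq this (SimpleGraph.Walk.length_map _ _)

lemma reach_dist_triangle {G : SimpleGraph V} {a b c : V} (h1 : G.Reachable a b)
    (h2 : G.Reachable b c) : G.dist a c ≤ G.dist a b + G.dist b c := by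
  obtain ⟨p, hp⟩ := h1.exists_walk_length_eq_dist
  obtain ⟨q, hq⟩ := h2.exists_walk_length_eq_dist
  have := SimpleGraph.dist_le (p.append q)
  rwa [SimpleGraph.Walk.length_append, hp, hq] at this

lemma mem_VL_of_reach {G : SimpleGraph V} {x y : V}
    (p : (restrictG G (VL G)).Walk x y) : x ∈ VL G → y ∈ VL G := by
  induction p with
  | nil => exact id
  | cons h p ih => exact fun _ => ih h.2.2

lemma IsLowComp.mem_iff {G : SimpleGraph V} {S : Set V} (hS : IsLowComp G S) {x : V}
    (hx : x ∈ S) (y : V) : ((restrictG G (VL G)).Reachable x y ↔ y ∈ S) := by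
  obtain ⟨-, x0, hx0, hiff⟩ := hS
  have h1 : (restrictG G (VL G)).Reachable x0 x := (hiff x).mpr hx
  exact ⟨fun h => (hiff y).mp (h1.trans h), fun h => h1.symm.trans ((hiff y).mpr h)⟩

lemma IsLowComp.nonempty {G : SimpleGraph V} {S : Set V} (hS : IsLowComp G S) :
    S.Nonempty := ⟨hS.2.choose, hS.2.choose_spec.1⟩

lemma lowcomp_eq {G : SimpleGraph V} {S T : Set V} (hS : IsLowComp G S)
    (hT : IsLowComp G T) {x : V} (hxS : x ∈ S) (hxT : x ∈ T) : S = T := by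
  ext y; rw [← hS.mem_iff hxS y, ← hT.mem_iff hxT y]

lemma IsLowComp.boundary {G : SimpleGraph V} {S : Set V} (hS : IsLowComp G S) {x y : V}
    (hx : x ∈ S) (hadj : G.Adj x y) (hy : y ∉ S) : y ∈ HNbrs G S := by
  by_cases hvh : y ∈ VH G
  · exact ⟨hvh, x, hx, hadj.symm⟩
  · exact absurd ((hS.mem_iff hx y).mp
      (SimpleGraph.Adj.reachable ⟨hadj, hS.1 hx, hvh⟩)) hy

lemma walk_in_S {G : SimpleGraph V} {S : Set V} (hS : IsLowComp G S) {x y : V}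
    (p : (restrictG G (VL G)).Walk x y) : x ∈ S →
    ∃ q : (edgeNbhdG G S).Walk x y, q.length = p.length ∧ ∀ a ∈ q.support, a ∈ S := by
  induction p with
  | nil => exact fun hx => ⟨.nil, rfl, by simpa using hx⟩
  | @cons a b c h p ih =>
    intro hx
    have hb : b ∈ S := (hS.mem_iff hx b).mp (SimpleGraph.Adj.reachable h)
    obtain ⟨q, hlen, hsup⟩ := ih hb
    refine ⟨.cons (edgeNbhdG_adj_mk (restrictG_adj_G h) (Or.inl hx)) q, by simp [hlen], ?_⟩
    intro a' ha'
    rw [SimpleGraph.Walk.support_cons, List.mem_cons] at ha'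
    rcases ha' with rfl | ha'
    · exact hx
    · exact hsup a' ha'

lemma reach_in_S {G : SimpleGraph V} {S : Set V} (hS : IsLowComp G S) {x y : V}
    (hx : x ∈ S) (hy : y ∈ S) : (edgeNbhdG G S).Reachable x y := by
  obtain ⟨p⟩ := (hS.mem_iff hx y).mpr hy
  obtain ⟨q, -, -⟩ := walk_in_S hS p hx
  exact ⟨q⟩

lemma reach_to_HNbr {G : SimpleGraph V} {S : Set V} (hS : IsLowComp G S) {x u : V}
    (hx : x ∈ S) (hu : u ∈ HNbrs G S) : (edgeNbhdG G S).Reachable x u := by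
  obtain ⟨-, w, hw, hadj⟩ := hu
  exact (reach_in_S hS hx hw).trans (SimpleGraph.Adj.reachable ⟨hadj.symm, Or.inl hw⟩)

lemma dist_HNbrs_le {G : SimpleGraph V} {S : Set V} (hS : IsLowComp G S) {u v : V}
    (hu : u ∈ HNbrs G S) (hv : v ∈ HNbrs G S) :
    (edgeNbhdG G S).dist u v ≤ S.ncard + 1 := by
  classical
  obtain ⟨huH, wu, hwu, hadju⟩ := hu
  obtain ⟨hvH, wv, hwv, hadjv⟩ := hv
  obtain ⟨p⟩ := (hS.mem_iff hwu wv).mpr hwv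
  obtain ⟨q, -, hsup⟩ := walk_in_S hS p hwu
  have hq'path := q.bypass_isPath
  have hsub : ∀ a ∈ q.bypass.support, a ∈ S :=
    fun a ha => hsup a (q.support_bypass_subset ha)
  have hlen : q.bypass.length + 1 ≤ S.ncard := by
    have h1 : q.bypass.support.length = q.bypass.length + 1 :=
      SimpleGraph.Walk.length_support _
    have h2 : q.bypass.support.toFinset.card = q.bypass.support.length :=
      List.toFinset_card_of_nodup hq'path.support_nodup
    have h3 : q.bypass.support.toFinset ⊆ S.toFinset := by
      intro a ha
      rw [List.mem_toFinset] at ha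
      rw [Set.mem_toFinset]
      exact hsub a ha
    have h4 := Finset.card_le_card h3
    rw [Set.ncard_eq_toFinset_card']
    omega
  have h5 := SimpleGraph.dist_le
    (SimpleGraph.Walk.cons (edgeNbhdG_adj_mk hadju (Or.inr hwu))
      (q.bypass.concat (edgeNbhdG_adj_mk hadjv.symm (Or.inl hwv))))
  rw [SimpleGraph.Walk.length_cons, SimpleGraph.Walk.length_concat] at h5
  omega

lemma crossing {G : SimpleGraph V} {S : Set V} (hS : IsLowComp G S) {x t : V}
    (p : G.Walk x t) : t ∉ S → x ∈ S →
    ∃ b ∈ HNbrs G S, ∃ (p1 : (edgeNbhdG G S).Walk x b) (p2 : G.Walk b t),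
      p1.length + p2.length = p.length := by
  induction p with
  | nil => exact fun ht hx => absurd hx ht
  | @cons a b c h p ih =>
    intro ht hx
    by_cases hb : b ∈ S
    · obtain ⟨b', hb', p1, p2, hlen⟩ := ih ht hb
      exact ⟨b', hb', .cons (edgeNbhdG_adj_mk h (Or.inl hx)) p1, p2, by
        rw [SimpleGraph.Walk.length_cons, SimpleGraph.Walk.length_cons]; omega⟩
    · refine ⟨b, hS.boundary hx h hb, .cons (edgeNbhdG_adj_mk h (Or.inl hx)) .nil, p, ?_⟩
      rw [SimpleGraph.Walk.length_cons, SimpleGraph.Walk.length_cons,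
        SimpleGraph.Walk.length_nil]
      omega

lemma crossing_dist {G : SimpleGraph V} (hG : G.Connected) {S : Set V}
    (hS : IsLowComp G S) {x t : V} (hx : x ∈ S) (ht : t ∉ S) :
    ∃ b ∈ HNbrs G S, (edgeNbhdG G S).dist x b + G.dist b t ≤ G.dist x t ∧
      G.dist x b + G.dist b t ≤ G.dist x t := by
  obtain ⟨p, hp⟩ := (hG x t).exists_walk_length_eq_dist
  obtain ⟨b, hb, p1, p2, hlen⟩ := crossing hS p ht hx
  have h1 : (edgeNbhdG G S).dist x b ≤ p1.length := SimpleGraph.dist_le p1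
  have h1' : G.dist x b ≤ p1.length := Gdist_le_walk p1
  have h2 : G.dist b t ≤ p2.length := SimpleGraph.dist_le p2
  exact ⟨b, hb, by omega, by omega⟩

lemma dist_le_via {G : SimpleGraph V} (hG : G.Connected) {S : Set V} {x b t : V}
    (hr : (edgeNbhdG G S).Reachable x b) :
    G.dist x t ≤ (edgeNbhdG G S).dist x b + G.dist b t := by
  obtain ⟨p1, h1⟩ := hr.exists_walk_length_eq_dist
  obtain ⟨p2, h2⟩ := (hG b t).exists_walk_length_eq_dist
  have h3 := SimpleGraph.dist_le
    (((p1.map (homEN G S)).copy (homEN_apply G S x) (homEN_apply G S b)).append p2)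
  rw [SimpleGraph.Walk.length_append, SimpleGraph.Walk.length_copy,
    SimpleGraph.Walk.length_map, h1, h2] at h3
  simpa using h3

lemma Gdist_le_dS {G : SimpleGraph V} {S : Set V} {x y : V}
    (hr : (edgeNbhdG G S).Reachable x y) : G.dist x y ≤ (edgeNbhdG G S).dist x y := by
  obtain ⟨p, hp⟩ := hr.exists_walk_length_eq_dist
  exact hp ▸ Gdist_le_walk p

section VStarMem

variable {G : SimpleGraph V} {P : Params V} {u v : V}

lemma VH_subset_VStar : VH G ⊆ VStarP G P :=
  fun _ hx => Or.inl (Or.inl (Or.inl hx))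

lemma type3_subset_VStar {S : Set V} (h3 : IsType3 G S) {x : V} (hx : x ∈ S) :
    x ∈ VStarP G P := Or.inl (Or.inl (Or.inr ⟨S, h3, hx⟩))

lemma A1_subset_VStar (hu : u ∈ VH G) : P.A1 u ⊆ VStarP G P :=
  fun _ hx => Or.inl (Or.inr (Set.mem_biUnion hu (Or.inl (Or.inl hx))))

lemma A2_subset_VStar (hu : u ∈ VH G) : P.A2 u ⊆ VStarP G P :=
  fun _ hx => Or.inl (Or.inr (Set.mem_biUnion hu (Or.inl (Or.inr hx))))

lemma B_subset_VStar (hu : u ∈ VH G) : P.B u ⊆ VStarP G P :=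
  fun _ hx => Or.inl (Or.inr (Set.mem_biUnion hu (Or.inr hx)))

lemma A1k_subset_VStar (hu : u ∈ VH G) (hv : v ∈ VH G) (huv : u ≠ v) {k : ℤ}
    (hk : |k| ≤ kBound V) : P.A1k k u v ⊆ VStarP G P :=
  fun _ hx => Or.inr (Set.mem_biUnion hu (Set.mem_biUnion hv (Set.mem_iUnion.2
    ⟨huv, Or.inl (Or.inl (Set.mem_biUnion hk (Or.inl hx)))⟩)))

lemma A2k_subset_VStar (hu : u ∈ VH G) (hv : v ∈ VH G) (huv : u ≠ v) {k : ℤ}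
    (hk : |k| ≤ kBound V) : P.A2k k u v ⊆ VStarP G P :=
  fun _ hx => Or.inr (Set.mem_biUnion hu (Set.mem_biUnion hv (Set.mem_iUnion.2
    ⟨huv, Or.inl (Or.inl (Set.mem_biUnion hk (Or.inr hx)))⟩)))

lemma Bl_subset_VStar (hu : u ∈ VH G) (hv : v ∈ VH G) (huv : u ≠ v) {l : ℕ}
    (hl : l ∈ Set.Icc 1 (lBound V)) : P.Bl l u v ⊆ VStarP G P :=
  fun _ hx => Or.inr (Set.mem_biUnion hu (Set.mem_biUnion hv (Set.mem_iUnion.2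
    ⟨huv, Or.inl (Or.inr (Set.mem_biUnion hl hx))⟩)))

lemma R_subset_VStar (hu : u ∈ VH G) (hv : v ∈ VH G) (huv : u ≠ v) :
    P.R u v ⊆ VStarP G P :=
  fun _ hx => Or.inr (Set.mem_biUnion hu (Set.mem_biUnion hv (Set.mem_iUnion.2
    ⟨huv, Or.inr hx⟩)))

end VStarMem

section AddPath

variable {G : SimpleGraph V}

/-- The inclusion of `H` into `addPathG H u v l`. -/
def homInl (H : SimpleGraph V) (u v : V) (l : ℕ) : H →g addPathG H u v l :=
  ⟨Sum.inl, fun {a b} h => ⟨by simpa using h.ne, Or.inl (Or.inl h)⟩⟩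

@[simp] lemma homInl_apply (H : SimpleGraph V) (u v : V) (l : ℕ) (a : V) :
    homInl H u v l a = Sum.inl a := rfl

/-- A homomorphism from `addPathG H u v l` back to `G`, given a `G`-walk from `u` to `v`
of length `l`, assuming `H ≤ G`. -/
lemma exists_hom_addPath (H : SimpleGraph V) (hle : ∀ a b, H.Adj a b → G.Adj a b)
    {u v : V} {l : ℕ} (W : G.Walk u v) (hW : W.length = l) :
    ∃ f : addPathG H u v l →g G, ∀ a : V, f (Sum.inl a) = a := by
  classical
  set g : V ⊕ Fin (l-1) → V := Sum.elim id (fun i : Fin (l-1) => W.getVert ((i : ℕ) + 1))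
    with hg
  have key : ∀ x y, addPathRel H u v l x y → G.Adj (g x) (g y) := by
    rintro (a | i) (b | j) h
    · simp only [addPathRel] at h
      simp only [hg, Sum.elim_inl, id]
      rcases h with h | ⟨hl1, ha, hb⟩
      · exact hle _ _ h
      · rw [ha, hb]
        have h0 : (0:ℕ) < W.length := by omega
        have hadj := W.adj_getVert_succ h0
        rw [W.getVert_zero] at hadj
        have h1 : W.getVert 1 = v := by
          rw [show (1:ℕ) = W.length by omega]
          exact W.getVert_length
        rwa [h1] at hadj
    · simp only [addPathRel] at h
      simp only [hg, Sum.elim_inl, Sum.elim_inr, id]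
      rcases h with ⟨ha, hi⟩ | ⟨ha, hi⟩
      · rw [ha, hi]
        have hlt : (0:ℕ) < W.length := by have := j.2; omega
        have hadj := W.adj_getVert_succ hlt
        rw [W.getVert_zero] at hadj
        simpa using hadj
      · rw [ha]
        have hlt : (j : ℕ) + 1 < W.length := by omega
        have hadj := W.adj_getVert_succ hlt
        have h1 : W.getVert ((j:ℕ) + 1 + 1) = v := by
          rw [show (j:ℕ) + 1 + 1 = W.length by omega]
          exact W.getVert_length
        rw [h1] at hadj
        exact hadj.symm
    · exact h.elim
    · simp only [addPathRel] at h
      simp only [hg, Sum.elim_inr]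
      have hlt : (i : ℕ) + 1 < W.length := by have := j.2; omega
      have hadj := W.adj_getVert_succ hlt
      rwa [show (i:ℕ) + 1 + 1 = (j:ℕ) + 1 by omega] at hadj
  refine ⟨⟨g, ?_⟩, fun a => rfl⟩
  rintro x y ⟨hne, h | h⟩
  · exact key x y h
  · exact (key y x h).symm

/-- A short walk along the added path from `inl u` to `inl v`. -/
lemma addPath_walk (H : SimpleGraph V) {u v : V} {l : ℕ} (hl : 1 ≤ l) (huv : u ≠ v) :
    ∃ w : (addPathG H u v l).Walk (Sum.inl u) (Sum.inl v), w.length ≤ l := by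
  rcases eq_or_lt_of_le hl with h1 | h2
  · have hadj : (addPathG H u v l).Adj (Sum.inl u) (Sum.inl v) := by
      refine ⟨by simpa using huv, Or.inl ?_⟩
      simp only [addPathRel]
      exact Or.inr ⟨h1.symm, by simp, by simp⟩
    refine ⟨.cons hadj .nil, ?_⟩
    rw [SimpleGraph.Walk.length_cons, SimpleGraph.Walk.length_nil]
    omega
  · -- l ≥ 2
    have hll : 2 ≤ l := h2
    have claim : ∀ d : ℕ, ∀ i : Fin (l-1), l - 2 - (i:ℕ) = d →
        ∃ w : (addPathG H u v l).Walk (Sum.inr i) (Sum.inl v),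
          w.length ≤ l - 1 - (i:ℕ) := by
      intro d
      induction d with
      | zero =>
        intro i hi
        have hieq : (i:ℕ) = l - 2 := by have := i.2; omega
        have hadj : (addPathG H u v l).Adj (Sum.inr i) (Sum.inl v) := by
          refine ⟨by simp, Or.inr ?_⟩
          simp only [addPathRel]
          exact Or.inr ⟨by simp, by omega⟩
        refine ⟨.cons hadj .nil, ?_⟩
        rw [SimpleGraph.Walk.length_cons, SimpleGraph.Walk.length_nil]
        omega
      | succ d ih =>
        intro i hi
        have hlt : (i:ℕ) + 1 < l - 1 := by have := i.2; omega
        obtain ⟨w, hw⟩ := ih ⟨(i:ℕ)+1, hlt⟩ (by simp; omega)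
        have hadj : (addPathG H u v l).Adj (Sum.inr i) (Sum.inr ⟨(i:ℕ)+1, hlt⟩) := by
          refine ⟨by simp [Fin.ext_iff], Or.inl ?_⟩
          simp only [addPathRel]
        refine ⟨.cons hadj w, ?_⟩
        rw [SimpleGraph.Walk.length_cons]
        simp only [] at hw
        omega
    have h0 : (0:ℕ) < l - 1 := by omega
    obtain ⟨w, hw⟩ := claim (l-2) ⟨0, h0⟩ (by simp)
    have hadj : (addPathG H u v l).Adj (Sum.inl u) (Sum.inr ⟨0, h0⟩) := by
      refine ⟨by simp, Or.inl ?_⟩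
      simp only [addPathRel]
      exact Or.inl ⟨by simp, by simp⟩
    refine ⟨.cons hadj w, ?_⟩
    rw [SimpleGraph.Walk.length_cons]
    simp only [] at hw
    omega

lemma stepA {G : SimpleGraph V} (hG : G.Connected) {S : Set V} (hS : IsLowComp G S)
    {s t : V} (u v : V) (hs : s ∈ S) (ht : t ∈ S) :
    G.dist s t ≤
      (addPathG (edgeNbhdG G S) u v (G.dist u v)).dist (Sum.inl s) (Sum.inl t) := by
  obtain ⟨W, hW⟩ := (hG u v).exists_walk_length_eq_dist
  obtain ⟨f, hf⟩ := exists_hom_addPath (edgeNbhdG G S) (fun a b h => h.1) W hW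
  have hreach : (addPathG (edgeNbhdG G S) u v (G.dist u v)).Reachable
      (Sum.inl s) (Sum.inl t) := by
    obtain ⟨p⟩ := reach_in_S hS hs ht
    exact ⟨p.map (homInl _ u v _)⟩
  obtain ⟨q, hq⟩ := hreach.exists_walk_length_eq_dist
  have h1 := SimpleGraph.dist_le (q.map f)
  rw [SimpleGraph.Walk.length_map, hq, hf s, hf t] at h1
  exact h1

lemma inner_escape {G : SimpleGraph V} {T : Set V} (hT : IsLowComp G T) {u v : V}
    (hH : HNbrs G T = {u, v}) {c y : V} (r : G.Walk c y) :
    c ∉ T → c ≠ u → c ≠ v → (y ∈ T ∨ y = u ∨ y = v) →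
    ∃ b, (b = u ∨ b = v) ∧ ∃ (r1 : G.Walk c b) (r2 : G.Walk b y),
      r1.length + r2.length = r.length := by
  induction r with
  | nil =>
    intro hc hcu hcv hy
    rcases hy with h | h | h
    · exact absurd h hc
    · exact absurd h hcu
    · exact absurd h hcv
  | @cons a b c' h r ih =>
    intro hc hcu hcv hy
    by_cases hbT : b ∈ T
    · exfalso
      have hmem := hT.boundary hbT h.symm hc
      rw [hH] at hmem
      rcases hmem with h' | h'
      · exact hcu h'
      · exact hcv h'
    · by_cases hbu : b = u ∨ b = v
      · refine ⟨b, hbu, .cons h .nil, r, ?_⟩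
        rw [SimpleGraph.Walk.length_cons, SimpleGraph.Walk.length_nil,
          SimpleGraph.Walk.length_cons]
        omega
      · push_neg at hbu
        obtain ⟨b', hb', r1, r2, hlen⟩ := ih hbT hbu.1 hbu.2 hy
        refine ⟨b', hb', .cons h r1, r2, ?_⟩
        rw [SimpleGraph.Walk.length_cons, SimpleGraph.Walk.length_cons]
        omega

lemma stepC {G : SimpleGraph V} (hG : G.Connected) {T : Set V} (hT : IsLowComp G T)
    {u v : V} (hH : HNbrs G T = {u, v}) (huv : u ≠ v) :
    ∀ n : ℕ, ∀ x y : V, (x ∈ T ∨ x = u ∨ x = v) → (y ∈ T ∨ y = u ∨ y = v) →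
    ∀ p : G.Walk x y, p.length ≤ n →
    ∃ q : (addPathG (edgeNbhdG G T) u v (G.dist u v)).Walk (Sum.inl x) (Sum.inl y),
      q.length ≤ p.length := by
  have hl1 : 1 ≤ G.dist u v := hG.pos_dist_of_ne huv
  intro n
  induction n with
  | zero =>
    intro x y hx hy p hp
    cases p with
    | nil => exact ⟨.nil, le_rfl⟩
    | cons h q => rw [SimpleGraph.Walk.length_cons] at hp; omega
  | succ n ih =>
    intro x y hx hy p hp
    cases p with
    | nil => exact ⟨.nil, le_rfl⟩
    | @cons _ z _ h r =>
      rw [SimpleGraph.Walk.length_cons] at hp ⊢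
      by_cases hz : z ∈ T ∨ z = u ∨ z = v
      · have hedge : (addPathG (edgeNbhdG G T) u v (G.dist u v)).Adj
            (Sum.inl x) (Sum.inl z) := by
          by_cases hxz : x ∈ T ∨ z ∈ T
          · exact ⟨by simpa using h.ne, Or.inl (Or.inl ⟨h, hxz⟩)⟩
          · push_neg at hxz
            have hx' : x = u ∨ x = v := hx.resolve_left hxz.1
            have hz' : z = u ∨ z = v := hz.resolve_left hxz.2
            refine ⟨by simpa using h.ne, ?_⟩
            have hd1 : G.dist u v = 1 := by
              have h2 : G.dist u v ≤ 1 := by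
                rcases hx' with rfl | rfl <;> rcases hz' with rfl | rfl
                · exact absurd rfl h.ne
                · have h3 := SimpleGraph.dist_le (SimpleGraph.Walk.cons h .nil)
                  simpa using h3
                · have h3 := SimpleGraph.dist_le (SimpleGraph.Walk.cons h.symm .nil)
                  simpa using h3
                · exact absurd rfl h.ne
              omega
            rcases hx' with rfl | rfl <;> rcases hz' with rfl | rfl
            · exact absurd rfl h.ne
            · refine Or.inl ?_
              simp only [addPathRel]
              exact Or.inr ⟨hd1, by simp, by simp⟩
            · refine Or.inr ?_
              simp only [addPathRel]
              exact Or.inr ⟨hd1, by simp, by simp⟩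
            · exact absurd rfl h.ne
        obtain ⟨q', hq'⟩ := ih z y hz hy r (by omega)
        refine ⟨.cons hedge q', ?_⟩
        rw [SimpleGraph.Walk.length_cons]
        omega
      · push_neg at hz
        have hxT : x ∉ T := by
          intro hxT
          have hmem := hT.boundary hxT h hz.1
          rw [hH] at hmem
          rcases hmem with h' | h'
          · exact hz.2.1 h'
          · exact hz.2.2 h'
        have hx' : x = u ∨ x = v := hx.resolve_left hxT
        obtain ⟨b, hb, r1, r2, hlen⟩ := inner_escape hT hH r hz.1 hz.2.1 hz.2.2 hy
        obtain ⟨q2, hq2⟩ := ih b y (Or.inr hb) hy r2 (by omega)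
        rcases eq_or_ne b x with rfl | hbx
        · exact ⟨q2, by omega⟩
        · have hdle : G.dist u v ≤ 1 + r1.length := by
            have h3 := SimpleGraph.dist_le (SimpleGraph.Walk.cons h r1)
            rw [SimpleGraph.Walk.length_cons] at h3
            rcases hx' with rfl | rfl <;> rcases hb with rfl | rfl
            · exact absurd rfl hbx
            · omega
            · rw [SimpleGraph.dist_comm]; omega
            · exact absurd rfl hbx
          have hPex : ∃ w0 : (addPathG (edgeNbhdG G T) u v (G.dist u v)).Walk
              (Sum.inl x) (Sum.inl b), w0.length ≤ G.dist u v := by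
            obtain ⟨w0, hw0⟩ := addPath_walk (edgeNbhdG G T) hl1 huv
            rcases hx' with rfl | rfl <;> rcases hb with rfl | rfl
            · exact absurd rfl hbx
            · exact ⟨w0, hw0⟩
            · exact ⟨w0.reverse, by rwa [SimpleGraph.Walk.length_reverse]⟩
            · exact absurd rfl hbx
          obtain ⟨w0, hw0⟩ := hPex
          refine ⟨w0.append q2, ?_⟩
          rw [SimpleGraph.Walk.length_append]
          omega

end AddPath

lemma dist_le_card' {W : Type*} [Fintype W] (H : SimpleGraph W) (x y : W) :
    H.dist x y ≤ Fintype.card W := by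
  classical
  by_cases h : H.Reachable x y
  · obtain ⟨p⟩ := h
    have h1 : H.dist x y ≤ p.bypass.length := SimpleGraph.dist_le _
    have h2 : p.bypass.length < Fintype.card W := p.bypass_isPath.length_lt
    omega
  · rw [SimpleGraph.dist_eq_zero_of_not_reachable h]; omega

lemma le_maxDistOn {W : Type*} [Fintype W] (H : SimpleGraph W) {A : Set W} {s t : W}
    (hs : s ∈ A) (ht : t ∈ A) : H.dist s t ≤ maxDistOn H A :=
  le_csSup ⟨Fintype.card W, by rintro d ⟨a, -, b, -, rfl⟩; exact dist_le_card' H a b⟩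
    ⟨s, hs, t, ht, rfl⟩

lemma maxDistOn_attained {W : Type*} [Fintype W] (H : SimpleGraph W) (A : Set W)
    (hA : A.Nonempty) : ∃ s ∈ A, ∃ t ∈ A, H.dist s t = maxDistOn H A := by
  obtain ⟨a, ha⟩ := hA
  have hmem := Nat.sSup_mem (s := {d : ℕ | ∃ s ∈ A, ∃ t ∈ A, d = H.dist s t})
    ⟨H.dist a a, a, ha, a, ha, rfl⟩
    ⟨Fintype.card W, by rintro d ⟨x, -, y, -, rfl⟩; exact dist_le_card' H x y⟩
  obtain ⟨s, hs, t, ht, hd⟩ := hmem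
  exact ⟨s, hs, t, ht, hd.symm⟩

lemma le_eccOn {G : SimpleGraph V} {u s : V} {S : Set V} (hs : s ∈ S) :
    G.dist u s ≤ eccOn G u S :=
  le_csSup ⟨Fintype.card V, by rintro d ⟨x, -, rfl⟩; exact dist_le_card' G u x⟩
    ⟨s, hs, rfl⟩

lemma eccOn_attained {G : SimpleGraph V} {u : V} {S : Set V} (hS : S.Nonempty) :
    ∃ w ∈ S, G.dist u w = eccOn G u S := by
  have hmem := Nat.sSup_mem (hS.image (G.dist u))
    ⟨Fintype.card V, by rintro d ⟨x, -, rfl⟩; exact dist_le_card' G u x⟩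
  obtain ⟨w, hw, hd⟩ := hmem
  exact ⟨w, hw, hd⟩

lemma le_eccK {G : SimpleGraph V} {u v w : V} {S : Set V} {k : ℤ}
    (hw : w ∈ Suk G S u v k) : (edgeNbhdG G S).dist u w ≤ eccK G S u v k :=
  le_csSup ⟨Fintype.card V, by rintro d ⟨x, -, rfl⟩; exact dist_le_card' _ u x⟩
    ⟨w, hw, rfl⟩

lemma eccK_attained {G : SimpleGraph V} {u v : V} {S : Set V} {k : ℤ}
    (h : 0 < eccK G S u v k) :
    ∃ w ∈ Suk G S u v k, (edgeNbhdG G S).dist u w = eccK G S u v k := by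
  have hne : ((edgeNbhdG G S).dist u '' Suk G S u v k).Nonempty := by
    by_contra hc
    rw [Set.not_nonempty_iff_eq_empty] at hc
    have : eccK G S u v k = 0 := by
      unfold eccK
      rw [hc]
      exact csSup_empty
    omega
  have hmem := Nat.sSup_mem hne
    ⟨Fintype.card V, by rintro d ⟨x, -, rfl⟩; exact dist_le_card' _ u x⟩
  obtain ⟨w, hw, hd⟩ := hmem
  exact ⟨w, hw, hd⟩

lemma replace1_core {G : SimpleGraph V} (hG : G.Connected) {u s t : V} {S T : Set V}
    (hSC1 : S ∈ C1 G u) (hTC1 : T ∈ C1 G u) (hsS : s ∈ S) (htT : t ∉ T)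
    (hecc : eccOn G u S ≤ eccOn G u T) :
    ∃ w ∈ T, G.dist s t ≤ G.dist w t := by
  obtain ⟨w, hwT, hw⟩ := eccOn_attained (G := G) (u := u) hTC1.1.nonempty
  refine ⟨w, hwT, ?_⟩
  obtain ⟨b, hb, -, h2⟩ := crossing_dist hG hTC1.1 hwT htT
  rw [hTC1.2.2, Set.mem_singleton_iff] at hb
  rw [hb] at h2
  have h0 : G.dist u s ≤ eccOn G u S := le_eccOn hsS
  have h3 : G.dist s t ≤ G.dist s u + G.dist u t := hG.dist_triangle
  have h4 : G.dist s u = G.dist u s := SimpleGraph.dist_comm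
  have h5 : G.dist w u = G.dist u w := SimpleGraph.dist_comm
  omega

lemma replace2_core {G : SimpleGraph V} (hG : G.Connected) {u v s t : V} {S T : Set V}
    {k : ℤ} (hSC2 : S ∈ C2 G u v) (hTC2 : T ∈ C2 G u v) (hsS : s ∈ S) (htT : t ∉ T)
    (hsu : s ≠ u)
    (hk : k = ((edgeNbhdG G S).dist s v : ℤ) - ((edgeNbhdG G S).dist s u : ℤ))
    (hecc : eccK G S u v k ≤ eccK G T u v k) :
    ∃ w ∈ T, G.dist s t ≤ G.dist w t := by
  have hSlow := hSC2.1
  have hTlow := hTC2.1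
  have huS : u ∈ HNbrs G S := by rw [hSC2.2.2]; exact Set.mem_insert _ _
  have hvS : v ∈ HNbrs G S := by rw [hSC2.2.2]; exact Set.mem_insert_of_mem _ rfl
  have hru : (edgeNbhdG G S).Reachable s u := reach_to_HNbr hSlow hsS huS
  have hrv : (edgeNbhdG G S).Reachable s v := reach_to_HNbr hSlow hsS hvS
  have hsSuk : s ∈ Suk G S u v k := ⟨hsS, by rw [hk]⟩
  have hcommS : (edgeNbhdG G S).dist u s = (edgeNbhdG G S).dist s u :=
    SimpleGraph.dist_comm
  have ha : (edgeNbhdG G S).dist u s ≤ eccK G S u v k := le_eccK hsSuk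
  have hapos : 0 < (edgeNbhdG G S).dist u s :=
    SimpleGraph.Reachable.pos_dist_of_ne hru.symm (Ne.symm hsu)
  have hTpos : 0 < eccK G T u v k := lt_of_lt_of_le hapos (le_trans ha hecc)
  obtain ⟨w, hwSuk, hw⟩ := eccK_attained hTpos
  have hwT : w ∈ T := hwSuk.1
  refine ⟨w, hwT, ?_⟩
  obtain ⟨b, hb, h2, -⟩ := crossing_dist hG hTlow hwT htT
  rw [hTC2.2.2] at hb
  have hup_u : G.dist s t ≤ (edgeNbhdG G S).dist s u + G.dist u t := dist_le_via hG hru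
  have hup_v : G.dist s t ≤ (edgeNbhdG G S).dist s v + G.dist v t := dist_le_via hG hrv
  have hcommT : (edgeNbhdG G T).dist u w = (edgeNbhdG G T).dist w u :=
    SimpleGraph.dist_comm
  have hwk : k ≤ ((edgeNbhdG G T).dist w v : ℤ) - ((edgeNbhdG G T).dist w u : ℤ) :=
    hwSuk.2
  rw [Set.mem_insert_iff, Set.mem_singleton_iff] at hb
  rcases hb with rfl | rfl
  · -- b = u
    omega
  · -- b = v
    omega

lemma samecomp1 {G : SimpleGraph V} {P : Params V} (hP : ValidParams G P) {u s t : V}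
    {S : Set V} (huH : u ∈ VH G) (hSC1 : S ∈ C1 G u) (hs : s ∈ S) (ht : t ∈ S) :
    ∃ s' ∈ VStarP G P, ∃ t' ∈ VStarP G P, G.dist s t ≤ G.dist s' t' := by
  obtain ⟨hBmem, hBmax⟩ := (hP.2.2.1 u huH).1 ⟨S, hSC1⟩
  have h1 : G.dist s t ≤ maxDistOn G (S ∪ {u}) :=
    le_maxDistOn G (Or.inl hs) (Or.inl ht)
  have h2 := hBmax S hSC1
  obtain ⟨s', hs', t', ht', heq⟩ := maxDistOn_attained G (P.B u ∪ {u}) ⟨u, Or.inr rfl⟩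
  have hmemV : ∀ a : V, a ∈ P.B u ∪ {u} → a ∈ VStarP G P := by
    intro a ha
    rcases ha with ha | ha
    · exact B_subset_VStar huH ha
    · exact VH_subset_VStar (show a ∈ VH G by rw [show a = u from ha]; exact huH)
  exact ⟨s', hmemV s' hs', t', hmemV t' ht', by omega⟩

lemma samecomp2 {G : SimpleGraph V} {P : Params V} (hG : G.Connected)
    (hP : ValidParams G P) {u v s t : V} {S : Set V} (huH : u ∈ VH G) (hvH : v ∈ VH G)
    (huv : u ≠ v) (hSC2 : S ∈ C2 G u v) (hs : s ∈ S) (ht : t ∈ S)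
    (hSR : S ≠ P.R u v) :
    ∃ s' ∈ VStarP G P, ∃ t' ∈ VStarP G P, G.dist s t ≤ G.dist s' t' := by
  have hSlow := hSC2.1
  have huS : u ∈ HNbrs G S := by rw [hSC2.2.2]; exact Set.mem_insert _ _
  have hvS : v ∈ HNbrs G S := by rw [hSC2.2.2]; exact Set.mem_insert_of_mem _ rfl
  have hl1 : 1 ≤ G.dist u v := hG.pos_dist_of_ne huv
  have hruv : (edgeNbhdG G S).Reachable u v :=
    (reach_to_HNbr hSlow hs huS).symm.trans (reach_to_HNbr hSlow hs hvS)
  have h3 : G.dist u v ≤ (edgeNbhdG G S).dist u v := Gdist_le_dS hruv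
  have h4 : (edgeNbhdG G S).dist u v ≤ S.ncard + 1 := dist_HNbrs_le hSlow huS hvS
  have h5 : S.ncard ≤ Nat.floor (sqrtn V) := Nat.le_floor hSC2.2.1
  have hlmem : G.dist u v ∈ Set.Icc 1 (lBound V) := ⟨hl1, by unfold lBound; omega⟩
  have hSmem : S ∈ C2 G u v \ {P.R u v} := ⟨hSC2, by simpa using hSR⟩
  obtain ⟨hBlmem, hBlmax⟩ :=
    (hP.2.2.2.2.2.2 u huH v hvH huv (G.dist u v) hl1).1 ⟨S, hSmem⟩
  have hTC2 : P.Bl (G.dist u v) u v ∈ C2 G u v := hBlmem.1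
  have hA : G.dist s t ≤ phiG G S u v (G.dist u v) := by
    refine le_trans (stepA hG hSlow u v hs ht) ?_
    exact le_maxDistOn _ ⟨s, Or.inl hs, rfl⟩ ⟨t, Or.inl ht, rfl⟩
  have hB : phiG G S u v (G.dist u v) ≤
      phiG G (P.Bl (G.dist u v) u v) u v (G.dist u v) := hBlmax S hSmem
  obtain ⟨x', hx', y', hy', heq⟩ := maxDistOn_attained
    (addPathG (edgeNbhdG G (P.Bl (G.dist u v) u v)) u v (G.dist u v))
    (Sum.inl '' (P.Bl (G.dist u v) u v ∪ {u, v}))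
    ⟨Sum.inl u, u, Or.inr (Set.mem_insert _ _), rfl⟩
  obtain ⟨s', hs'mem, rfl⟩ := hx'
  obtain ⟨t', ht'mem, rfl⟩ := hy'
  have hmem' : ∀ a : V, a ∈ P.Bl (G.dist u v) u v ∪ {u, v} →
      a ∈ P.Bl (G.dist u v) u v ∨ a = u ∨ a = v := by
    intro a ha
    rcases ha with ha | ha
    · exact Or.inl ha
    · rcases ha with ha | ha
      · exact Or.inr (Or.inl ha)
      · exact Or.inr (Or.inr ha)
  have hC : (addPathG (edgeNbhdG G (P.Bl (G.dist u v) u v)) u v (G.dist u v)).dist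
      (Sum.inl s') (Sum.inl t') ≤ G.dist s' t' := by
    obtain ⟨p, hp⟩ := (hG s' t').exists_walk_length_eq_dist
    obtain ⟨q, hq⟩ := stepC hG hTC2.1 hTC2.2.2 huv p.length s' t'
      (hmem' s' hs'mem) (hmem' t' ht'mem) p le_rfl
    have hd := SimpleGraph.dist_le q
    omega
  have hmemV : ∀ a : V, a ∈ P.Bl (G.dist u v) u v ∪ {u, v} → a ∈ VStarP G P := by
    intro a ha
    rcases hmem' a ha with h | h | h
    · exact Bl_subset_VStar huH hvH huv hlmem h
    · exact VH_subset_VStar (show a ∈ VH G by rw [h]; exact huH)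
    · exact VH_subset_VStar (show a ∈ VH G by rw [h]; exact hvH)
  refine ⟨s', hmemV s' hs'mem, t', hmemV t' ht'mem, ?_⟩
  have heq' : (addPathG (edgeNbhdG G (P.Bl (G.dist u v) u v)) u v (G.dist u v)).dist
      (Sum.inl s') (Sum.inl t') = phiG G (P.Bl (G.dist u v) u v) u v (G.dist u v) :=
    heq
  omega

lemma replace_lemma {G : SimpleGraph V} {P : Params V} (hG : G.Connected)
    (hP : ValidParams G P) {S : Set V} {s t : V} (hS : IsLowComp G S) (hsS : s ∈ S)
    (htS : t ∉ S) (hsV : s ∉ VStarP G P) :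
    ∃ w, w ∈ VStarP G P ∧ (∃ T, IsLowComp G T ∧ w ∈ T ∧ t ∉ T) ∧
      G.dist s t ≤ G.dist w t := by
  by_cases h1 : IsType1 G S
  · obtain ⟨-, hsmall, u, hu⟩ := h1
    have huH : u ∈ VH G := (show u ∈ HNbrs G S by rw [hu]; rfl).1
    have hSC1 : S ∈ C1 G u := ⟨hS, hsmall, hu⟩
    obtain ⟨hA1mem, hA1max⟩ := (hP.1 u huH).1 ⟨S, hSC1⟩
    by_cases htA1 : t ∈ P.A1 u
    · have hne : S ≠ P.A1 u := fun he => htS (he ▸ htA1)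
      have hdiff : S ∈ C1 G u \ {P.A1 u} := ⟨hSC1, by simpa using hne⟩
      obtain ⟨hA2mem, hA2max⟩ := (hP.2.1 u huH).1 ⟨S, hdiff⟩
      have hTC1 : P.A2 u ∈ C1 G u := hA2mem.1
      have hA2ne : P.A2 u ≠ P.A1 u := by simpa using hA2mem.2
      have htT : t ∉ P.A2 u := fun ht2 =>
        hA2ne (lowcomp_eq hTC1.1 hA1mem.1 ht2 htA1)
      obtain ⟨w, hwT, hd⟩ := replace1_core hG hSC1 hTC1 hsS htT (hA2max S hdiff)
      exact ⟨w, A2_subset_VStar huH hwT, ⟨P.A2 u, hTC1.1, hwT, htT⟩, hd⟩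
    · obtain ⟨w, hwT, hd⟩ := replace1_core hG hSC1 hA1mem hsS htA1 (hA1max S hSC1)
      exact ⟨w, A1_subset_VStar huH hwT, ⟨P.A1 u, hA1mem.1, hwT, htA1⟩, hd⟩
  · by_cases h2 : IsType2 G S
    · obtain ⟨-, hsmall, u, v, huv, hUV⟩ := h2
      have huS : u ∈ HNbrs G S := by rw [hUV]; exact Set.mem_insert _ _
      have hvS : v ∈ HNbrs G S := by rw [hUV]; exact Set.mem_insert_of_mem _ rfl
      have huH := huS.1
      have hvH := hvS.1
      have hSC2 : S ∈ C2 G u v := ⟨hS, hsmall, hUV⟩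
      set k : ℤ := ((edgeNbhdG G S).dist s v : ℤ) - ((edgeNbhdG G S).dist s u : ℤ)
        with hk
      have hru := reach_to_HNbr hS hsS huS
      have hrv := reach_to_HNbr hS hsS hvS
      have htri1 : (edgeNbhdG G S).dist s v ≤
          (edgeNbhdG G S).dist s u + (edgeNbhdG G S).dist u v :=
        reach_dist_triangle hru (hru.symm.trans hrv)
      have htri2 : (edgeNbhdG G S).dist s u ≤
          (edgeNbhdG G S).dist s v + (edgeNbhdG G S).dist v u :=
        reach_dist_triangle hrv (hrv.symm.trans hru)
      have hcm : (edgeNbhdG G S).dist v u = (edgeNbhdG G S).dist u v :=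
        SimpleGraph.dist_comm
      have hd1 : (edgeNbhdG G S).dist u v ≤ S.ncard + 1 := dist_HNbrs_le hS huS hvS
      have h5 : S.ncard ≤ Nat.floor (sqrtn V) := Nat.le_floor hsmall
      have hkB : |k| ≤ kBound V := by
        rw [abs_le]
        unfold kBound
        constructor <;> omega
      have hsu : s ≠ u := fun he => (hS.1 hsS) (by rw [he]; exact huH)
      obtain ⟨hA1kmem, hA1kmax⟩ := (hP.2.2.2.2.1 u huH v hvH huv k).1 ⟨S, hSC2⟩
      by_cases htA1k : t ∈ P.A1k k u v
      · have hne : S ≠ P.A1k k u v := fun he => htS (he ▸ htA1k)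
        have hdiff : S ∈ C2 G u v \ {P.A1k k u v} := ⟨hSC2, by simpa using hne⟩
        obtain ⟨hA2kmem, hA2kmax⟩ := (hP.2.2.2.2.2.1 u huH v hvH huv k).1 ⟨S, hdiff⟩
        have hTC2 : P.A2k k u v ∈ C2 G u v := hA2kmem.1
        have hA2kne : P.A2k k u v ≠ P.A1k k u v := by simpa using hA2kmem.2
        have htT : t ∉ P.A2k k u v := fun ht2 =>
          hA2kne (lowcomp_eq hTC2.1 hA1kmem.1 ht2 htA1k)
        obtain ⟨w, hwT, hd⟩ :=
          replace2_core hG hSC2 hTC2 hsS htT hsu hk (hA2kmax S hdiff)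
        exact ⟨w, A2k_subset_VStar huH hvH huv hkB hwT, ⟨_, hTC2.1, hwT, htT⟩, hd⟩
      · obtain ⟨w, hwT, hd⟩ :=
          replace2_core hG hSC2 hA1kmem hsS htA1k hsu hk (hA1kmax S hSC2)
        exact ⟨w, A1k_subset_VStar huH hvH huv hkB hwT,
          ⟨_, hA1kmem.1, hwT, htA1k⟩, hd⟩
    · exact absurd (type3_subset_VStar ⟨hS, h1, h2⟩ hsS) hsV

/-- For any two vertices `s, t` of `G`, there exist vertices `s', t'` of `G*` with
`dist_G(s,t) ≤ dist_G(s',t')`. -/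
theorem exists_pair_in_Gstar (G : SimpleGraph V) (hG : G.Connected)
    (hn : 1 ≤ Fintype.card V) (P : Params V) (hP : ValidParams G P) (s t : V) :
    ∃ s' ∈ VStarP G P, ∃ t' ∈ VStarP G P, G.dist s t ≤ G.dist s' t' := by
  classical
  have aux : ∀ s t : V, s ∉ VStarP G P →
      ∃ s' ∈ VStarP G P, ∃ t' ∈ VStarP G P, G.dist s t ≤ G.dist s' t' := by
    intro s t hs
    have hsVL : s ∈ VL G := fun h => hs (VH_subset_VStar h)
    set S : Set V := {y | (restrictG G (VL G)).Reachable s y} with hSdef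
    have hS : IsLowComp G S := by
      refine ⟨?_, s, SimpleGraph.Reachable.refl s, fun y => Iff.rfl⟩
      intro y hy
      obtain ⟨p⟩ := hy
      exact mem_VL_of_reach p hsVL
    have hsS : s ∈ S := SimpleGraph.Reachable.refl s
    by_cases htS : t ∈ S
    · -- same component
      by_cases h1 : IsType1 G S
      · obtain ⟨-, hsmall, u, hu⟩ := h1
        have huH : u ∈ VH G := (show u ∈ HNbrs G S by rw [hu]; rfl).1
        exact samecomp1 hP huH ⟨hS, hsmall, hu⟩ hsS htS
      · by_cases h2 : IsType2 G S
        · obtain ⟨-, hsmall, u, v, huv, hUV⟩ := h2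
          have huS : u ∈ HNbrs G S := by rw [hUV]; exact Set.mem_insert _ _
          have hvS : v ∈ HNbrs G S := by rw [hUV]; exact Set.mem_insert_of_mem _ rfl
          have hSR : S ≠ P.R u v := by
            intro he
            exact hs (R_subset_VStar huS.1 hvS.1 huv (he ▸ hsS))
          exact samecomp2 hG hP huS.1 hvS.1 huv ⟨hS, hsmall, hUV⟩ hsS htS hSR
        · exact absurd (type3_subset_VStar ⟨hS, h1, h2⟩ hsS) hs
    · obtain ⟨w, hwV, ⟨Tw, hTw, hwTw, htTw⟩, hd⟩ :=
        replace_lemma hG hP hS hsS htS hs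
      by_cases htV : t ∈ VStarP G P
      · exact ⟨w, hwV, t, htV, hd⟩
      · have htVL : t ∈ VL G := fun h => htV (VH_subset_VStar h)
        set St : Set V := {y | (restrictG G (VL G)).Reachable t y} with hStdef
        have hSt : IsLowComp G St := by
          refine ⟨?_, t, SimpleGraph.Reachable.refl t, fun y => Iff.rfl⟩
          intro y hy
          obtain ⟨p⟩ := hy
          exact mem_VL_of_reach p htVL
        have htSt : t ∈ St := SimpleGraph.Reachable.refl t
        have hwSt : w ∉ St := fun hw =>
          htTw ((lowcomp_eq hSt hTw hw hwTw) ▸ htSt)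
        obtain ⟨w', hw'V, -, hd2⟩ := replace_lemma hG hP hSt htSt hwSt htV
        refine ⟨w', hw'V, w, hwV, ?_⟩
        have hc1 : G.dist w t = G.dist t w := SimpleGraph.dist_comm
        omega
  by_cases hs : s ∈ VStarP G P
  · by_cases ht : t ∈ VStarP G P
    · exact ⟨s, hs, t, ht, le_rfl⟩
    · obtain ⟨s', h1, t', h2, h3⟩ := aux t s ht
      exact ⟨s', h1, t', h2, by rw [SimpleGraph.dist_comm]; exact h3⟩
  · exact aux s t hs

end
end EnergyDiameter
end
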